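/- arXiv:1702.04239 — 4 statements merged into one kernel-verified Lean document; each statement's English description precedes it below -/
import Mathlib

section
/- Fix p ∈ (0,1). For s ∈ [0,1] define r(s) = √(1 − 4p(1−p)(1−s²)) and define the entropy S(s) = −(1/2 + r(s)/2)·ln(1/2 + r(s)/2) − (1/2 − r(s)/2)·ln(1/2 − r(s)/2), with the convention 0·ln 0 = 0. Then the map s ↦ S(s) is strictly decreasing (strictly antitone) on [0,1], and S(1) = 0. -/
/-!
The spectrum `{1/2 ± r/2}` has entropy `binEntropy (1/2 + r/2)`, and `binEntropy` is strictly
decreasing on `[1/2, 1]`. The purity `r(s) = √((1 - c) + c s²)` with `c = 4p(1-p) ∈ (0, 1]`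
is strictly increasing from `[0, 1]` into `[0, 1]`, with `r(1) = 1`, where the entropy vanishes.
-/

open Real Set

lemma binEntropy_eq_neg_mul_log_sub_mul_log (x : ℝ) :
    binEntropy x = -(x * log x) - (1 - x) * log (1 - x) := by
  simp only [binEntropy, log_inv]
  ring

lemma strictAntiOn_binEntropy_half_add_half :
    StrictAntiOn (fun x : ℝ => binEntropy (1/2 + x/2)) (Icc 0 1) := by
  have hmono : StrictMonoOn (fun x : ℝ => 1/2 + x/2) (Icc 0 1) :=
    fun x _ y _ hxy => by dsimp only; linarith
  have hmaps : MapsTo (fun x : ℝ => 1/2 + x/2) (Icc 0 1) (Icc 2⁻¹ 1) :=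
    fun x ⟨hx0, hx1⟩ => ⟨by linarith, by linarith⟩
  exact binEntropy_strictAntiOn.comp_strictMonoOn hmono hmaps

section Purity

variable {c : ℝ}

lemma sqrt_one_sub_mul_one_sub_sq_mem_Icc (hc0 : 0 ≤ c) {s : ℝ}
    (hs : s ∈ Icc (0 : ℝ) 1) : √(1 - c * (1 - s^2)) ∈ Icc (0 : ℝ) 1 := by
  obtain ⟨hs0, hs1⟩ := hs
  refine ⟨sqrt_nonneg _, sqrt_le_one.mpr ?_⟩
  have hs_sq : 0 ≤ 1 - s^2 := by nlinarith
  nlinarith [mul_nonneg hc0 hs_sq]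

lemma strictMonoOn_sqrt_one_sub_mul_one_sub_sq (hc0 : 0 < c) (hc1 : c ≤ 1) :
    StrictMonoOn (fun s : ℝ => √(1 - c * (1 - s^2))) (Icc 0 1) := by
  intro s ⟨hs0, _⟩ t _ hst
  apply sqrt_lt_sqrt
  · nlinarith [mul_nonneg hc0.le (sq_nonneg s)]
  · nlinarith [mul_lt_mul_of_pos_left (pow_lt_pow_left₀ hst hs0 two_ne_zero) hc0]

end Purity

lemma four_mul_mul_one_sub_le_one (p : ℝ) : 4 * p * (1 - p) ≤ 1 := by
  nlinarith [sq_nonneg (2 * p - 1)]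

/-- For fixed `p ∈ (0,1)`, with `r(s) = √(1 − 4p(1−p)(1−s²))` and entanglement entropy
`S(s) = −(1/2 + r/2)ln(1/2 + r/2) − (1/2 − r/2)ln(1/2 − r/2)`, the map `s ↦ S(s)` is
strictly decreasing on `[0,1]` and `S(1) = 0`. (In Lean, `Real.log 0 = 0`, which realizes
the convention `0 · ln 0 = 0`.) -/
theorem stmt2 (p : ℝ) (hp : p ∈ Set.Ioo (0 : ℝ) 1)
    (r S : ℝ → ℝ)
    (hr : ∀ s : ℝ, r s = Real.sqrt (1 - 4*p*(1-p)*(1 - s^2)))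
    (hS : ∀ s : ℝ, S s = -((1/2 + r s / 2) * Real.log (1/2 + r s / 2))
        - (1/2 - r s / 2) * Real.log (1/2 - r s / 2)) :
    StrictAntiOn S (Set.Icc 0 1) ∧ S 1 = 0 := by
  have hS_eq : S = (fun x => binEntropy (1/2 + x/2)) ∘ r := by
    ext s
    rw [hS, Function.comp_apply, binEntropy_eq_neg_mul_log_sub_mul_log]
    ring_nf
  have hr_eq : r = fun s => √(1 - 4 * p * (1 - p) * (1 - s^2)) := funext hr
  have hc0 : 0 < 4 * p * (1 - p) := mul_pos (mul_pos four_pos hp.1) (sub_pos.mpr hp.2)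
  have hc1 := four_mul_mul_one_sub_le_one p
  refine ⟨?_, ?_⟩
  · rw [hS_eq]
    refine strictAntiOn_binEntropy_half_add_half.comp_strictMonoOn ?_ ?_
    · rw [hr_eq]
      exact strictMonoOn_sqrt_one_sub_mul_one_sub_sq hc0 hc1
    · intro s hs
      rw [hr]
      exact sqrt_one_sub_mul_one_sub_sq_mem_Icc hc0.le hs
  · rw [hS_eq, Function.comp_apply, hr]
    norm_num
end

section
/- Let h : ℝ → ℝ be measurable and bounded on [0, ∞), and continuous at 0 (from the right). Then lim_{t → ∞} (1/t) ∫₀^∞ h(ω) · (1 − cos(ωt))/ω² dω = (π/2) · h(0). -/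
/-!
The substitution `u = ω t` turns `(1/t) ∫₀^∞ h(ω)(1 − cos ωt)/ω² dω` into
`∫₀^∞ h(u/t)(1 − cos u)/u² du`. Since `h` is bounded and the kernel `(1 − cos u)/u²` is
integrable, dominated convergence gives the limit `h(0) ∫₀^∞ (1 − cos u)/u² du`. The kernel
integral is `π/2`: writing `1/x² = ∫₀^∞ u e^{-xu} du` and swapping the integrals leaves
`∫₀^∞ u · (1/u − u/(1+u²)) du = ∫₀^∞ du/(1+u²)`, the bracket being the Laplace transform
of `1 − cos`.
-/

open MeasureTheory Real Filter Set Topology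

lemma integrable_one_sub_cos_div_sq : Integrable fun x : ℝ => (1 - cos x) / x ^ 2 := by
  refine (integrable_inv_one_add_sq.const_mul 3).mono'
    (Measurable.aestronglyMeasurable (by fun_prop)) (ae_of_all _ fun x => ?_)
  have hcos : 1 - x ^ 2 / 2 ≤ cos x := one_sub_sq_div_two_le_cos
  have h0 : 0 ≤ 1 - cos x := sub_nonneg.2 (cos_le_one x)
  rw [norm_of_nonneg (by positivity), ← div_eq_mul_inv]
  rcases eq_or_ne x 0 with rfl | hx
  · simp
  · rw [div_le_div_iff₀ (by positivity) (by positivity)]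
    -- `1 - cos x` is at most `x ^ 2 / 2` and at most `2`
    nlinarith [neg_one_le_cos x]

lemma integral_cos_mul_exp_neg_mul_Ioi {u : ℝ} (hu : 0 < u) :
    ∫ x in Ioi 0, cos x * exp (-u * x) = u / (1 + u ^ 2) := by
  set F : ℝ → ℝ := fun x => exp (-u * x) * (sin x - u * cos x) / (1 + u ^ 2)
  have hderiv : ∀ x ∈ Ici (0 : ℝ), HasDerivAt F (cos x * exp (-u * x)) x := by
    intro x _
    have hexp : HasDerivAt (fun x => exp (-u * x)) (exp (-u * x) * -u) x := by
      simpa using ((hasDerivAt_id x).const_mul (-u)).exp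
    have hF : HasDerivAt F ((exp (-u * x) * -u * (sin x - u * cos x)
        + exp (-u * x) * (cos x - u * -sin x)) / (1 + u ^ 2)) x :=
      (hexp.mul ((hasDerivAt_sin x).sub ((hasDerivAt_cos x).const_mul u))).div_const _
    convert hF using 1
    field_simp
    ring
  have hint : IntegrableOn (fun x => cos x * exp (-u * x)) (Ioi 0) :=
    (exp_neg_integrableOn_Ioi 0 hu).bdd_mul (by fun_prop) (ae_of_all _ fun x => abs_cos_le_one x)
  have hlim : Tendsto F atTop (𝓝 0) := by
    have hexp : Tendsto (fun x => exp (-u * x)) atTop (𝓝 0) :=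
      tendsto_exp_atBot.comp (tendsto_id.const_mul_atTop_of_neg (neg_neg_of_pos hu))
    have hbdd : IsBoundedUnder (· ≤ ·) atTop (fun x => ‖(sin x - u * cos x) / (1 + u ^ 2)‖) := by
      refine isBoundedUnder_of ⟨(1 + u) / (1 + u ^ 2), fun x => ?_⟩
      rw [norm_div, norm_of_nonneg (by positivity : (0 : ℝ) ≤ 1 + u ^ 2)]
      gcongr
      calc ‖sin x - u * cos x‖ ≤ ‖sin x‖ + u * ‖cos x‖ := by
            simpa [norm_mul, abs_of_pos hu] using norm_sub_le (sin x) (u * cos x)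
        _ ≤ 1 + u * 1 := by gcongr <;> [exact abs_sin_le_one x; exact abs_cos_le_one x]
        _ = 1 + u := by ring
    simpa [F, mul_div_assoc] using hexp.zero_mul_isBoundedUnder_le hbdd
  rw [integral_Ioi_of_hasDerivAt_of_tendsto' hderiv hint hlim]
  simp only [F, neg_mul, mul_zero, neg_zero, exp_zero, sin_zero, cos_zero, mul_one, zero_sub,
    mul_neg, one_mul]
  ring

lemma integral_one_sub_cos_mul_exp_neg_mul_Ioi {u : ℝ} (hu : 0 < u) :
    ∫ x in Ioi 0, (1 - cos x) * exp (-u * x) = 1 / u - u / (1 + u ^ 2) := by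
  have hexp := exp_neg_integrableOn_Ioi 0 hu
  have hcos : IntegrableOn (fun x => cos x * exp (-u * x)) (Ioi 0) :=
    hexp.bdd_mul (by fun_prop) (ae_of_all _ fun x => abs_cos_le_one x)
  simp only [sub_mul, one_mul]
  rw [integral_sub hexp hcos, integral_cos_mul_exp_neg_mul_Ioi hu,
    integral_exp_mul_Ioi (neg_neg_of_pos hu)]
  simp [neg_div]

lemma integrableOn_mul_exp_neg_mul_Ioi {x : ℝ} (hx : 0 < x) :
    IntegrableOn (fun u => u * exp (-x * u)) (Ioi 0) := by
  simpa using integrableOn_rpow_mul_exp_neg_mul_rpow (p := 1) (s := 1) (b := x)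
    (by norm_num) one_pos hx

lemma integral_mul_exp_neg_mul_Ioi {x : ℝ} (hx : 0 < x) :
    ∫ u in Ioi 0, u * exp (-x * u) = 1 / x ^ 2 := by
  have h := integral_rpow_mul_exp_neg_mul_Ioi two_pos hx
  norm_num [Gamma_two] at h
  simpa [neg_mul] using h

theorem integral_one_sub_cos_div_sq_Ioi : ∫ x in Ioi 0, (1 - cos x) / x ^ 2 = π / 2 := by
  set μ := volume.restrict (Ioi (0 : ℝ))
  set f : ℝ → ℝ → ℝ := fun x u => (1 - cos x) * (u * exp (-x * u))
  have hf_nonneg : ∀ x, ∀ u ∈ Ioi (0 : ℝ), 0 ≤ f x u := fun x u hu =>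
    mul_nonneg (sub_nonneg.2 (cos_le_one x)) (mul_nonneg (le_of_lt hu) (exp_pos _).le)
  have hinner_u : ∀ x ∈ Ioi (0 : ℝ), ∫ u, f x u ∂μ = (1 - cos x) / x ^ 2 := fun x hx => by
    rw [integral_const_mul, integral_mul_exp_neg_mul_Ioi hx, mul_one_div]
  have hinner_x : ∀ u ∈ Ioi (0 : ℝ), ∫ x, f x u ∂μ = (1 + u ^ 2)⁻¹ := fun u hu => by
    have hu : (0 : ℝ) < u := hu
    calc ∫ x, f x u ∂μ = u * ∫ x in Ioi 0, (1 - cos x) * exp (-u * x) := by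
          rw [← integral_const_mul]; congr 1; ext x; unfold f; ring_nf
      _ = (1 + u ^ 2)⁻¹ := by
          rw [integral_one_sub_cos_mul_exp_neg_mul_Ioi hu]; field_simp; ring
  have hint : Integrable (Function.uncurry f) (μ.prod μ) := by
    rw [integrable_prod_iff (Measurable.aestronglyMeasurable (by unfold f; fun_prop))]
    refine ⟨ae_restrict_of_forall_mem measurableSet_Ioi fun x hx =>
      (integrableOn_mul_exp_neg_mul_Ioi hx).const_mul (1 - cos x), ?_⟩
    refine integrable_one_sub_cos_div_sq.integrableOn.congr_fun (fun x hx => ?_) measurableSet_Ioi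
    change (1 - cos x) / x ^ 2 = ∫ u, ‖f x u‖ ∂μ
    rw [← hinner_u x hx]
    exact setIntegral_congr_fun measurableSet_Ioi fun u hu =>
      (norm_of_nonneg (hf_nonneg x u hu)).symm
  calc ∫ x in Ioi 0, (1 - cos x) / x ^ 2 = ∫ x, ∫ u, f x u ∂μ ∂μ :=
        (setIntegral_congr_fun measurableSet_Ioi hinner_u).symm
    _ = ∫ u, ∫ x, f x u ∂μ ∂μ := integral_integral_swap hint
    _ = π / 2 := by
        rw [setIntegral_congr_fun measurableSet_Ioi hinner_x, integral_Ioi_inv_one_add_sq,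
          arctan_zero, sub_zero]

theorem tendsto_integral_comp_div_smul_Ioi {E : Type*} [NormedAddCommGroup E]
    [NormedSpace ℝ E] {h : ℝ → ℝ} {K : ℝ → E} (hmeas : Measurable h) {C : ℝ}
    (hC : ∀ ω ∈ Ici (0 : ℝ), |h ω| ≤ C) (hcont : ContinuousWithinAt h (Ici 0) 0)
    (hK : IntegrableOn K (Ioi 0)) :
    Tendsto (fun t => ∫ u in Ioi 0, h (u / t) • K u) atTop (𝓝 (h 0 • ∫ u in Ioi 0, K u)) := by
  rw [← integral_smul]
  refine tendsto_integral_filter_of_dominated_convergence (fun u => C * ‖K u‖)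
    (Eventually.of_forall fun t =>
      (hmeas.comp (measurable_id.div_const t)).aestronglyMeasurable.smul hK.aestronglyMeasurable)
    ?_ (hK.norm.const_mul C) ?_
  · filter_upwards [eventually_gt_atTop 0] with t ht
    refine ae_restrict_of_forall_mem measurableSet_Ioi fun u hu => ?_
    rw [norm_smul]
    exact mul_le_mul_of_nonneg_right (hC _ (div_pos hu ht).le) (norm_nonneg _)
  · refine ae_restrict_of_forall_mem measurableSet_Ioi fun u hu => ?_
    have hdiv : Tendsto (fun t => u / t) atTop (𝓝[Ici 0] 0) :=
      tendsto_nhdsWithin_iff.2 ⟨tendsto_const_nhds.div_atTop tendsto_id,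
        (eventually_gt_atTop 0).mono fun t ht => (div_pos hu ht).le⟩
    exact (hcont.tendsto.comp hdiv).smul_const (K u)

lemma integral_mul_one_sub_cos_mul_div_sq_Ioi (h : ℝ → ℝ) {t : ℝ} (ht : 0 < t) :
    ∫ ω in Ioi 0, h ω * (1 - cos (ω * t)) / ω ^ 2
      = t * ∫ u in Ioi 0, h (u / t) * ((1 - cos u) / u ^ 2) := by
  set g : ℝ → ℝ := fun u => h (u / t) * ((1 - cos u) / u ^ 2)
  have hscale : ∀ ω, h ω * (1 - cos (ω * t)) / ω ^ 2 = t ^ 2 * g (ω * t) := fun ω => by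
    rcases eq_or_ne ω 0 with rfl | hω
    · simp [g]
    · simp only [g, mul_div_cancel_right₀ ω ht.ne']
      field_simp
  simp_rw [hscale]
  rw [integral_const_mul, integral_comp_mul_right_Ioi g 0 ht, zero_mul, smul_eq_mul]
  field_simp

/-- If `h : ℝ → ℝ` is measurable and bounded on `[0,∞)` and continuous at `0` from the
right, then `(1/t) ∫₀^∞ h(ω)(1 − cos(ωt))/ω² dω → (π/2) h(0)` as `t → ∞`. -/
theorem stmt5 (h : ℝ → ℝ) (hmeas : Measurable h)
    (hbdd : ∃ C : ℝ, ∀ ω ∈ Set.Ici (0:ℝ), |h ω| ≤ C)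
    (hcont : ContinuousWithinAt h (Set.Ici 0) 0) :
    Filter.Tendsto
      (fun t : ℝ => (1/t) * ∫ ω in Set.Ioi (0:ℝ), h ω * (1 - Real.cos (ω * t)) / ω ^ 2)
      Filter.atTop (nhds (Real.pi / 2 * h 0)) := by
  obtain ⟨C, hC⟩ := hbdd
  have hlim := tendsto_integral_comp_div_smul_Ioi hmeas hC hcont
    integrable_one_sub_cos_div_sq.integrableOn
  simp only [smul_eq_mul, integral_one_sub_cos_div_sq_Ioi, mul_comm (h 0)] at hlim
  refine hlim.congr' ?_
  filter_upwards [eventually_gt_atTop 0] with t ht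
  rw [integral_mul_one_sub_cos_mul_div_sq_Ioi h ht, ← mul_assoc, one_div_mul_cancel ht.ne',
    one_mul]
end

section
/- Let 0 < ω₀ < ω₁, let λ ∈ ℝ, let t > 0, and let h : ℝ → ℝ be measurable on [ω₀, ω₁] with 0 ≤ m ≤ h(ω) ≤ M for all ω ∈ [ω₀, ω₁]. Then exp(−4λ² M (ω₁ − ω₀ + 2/t)/ω₀²) ≤ exp(−4λ² ∫_{ω₀}^{ω₁} h(ω)(1 − cos(ωt))/ω² dω) ≤ exp(−4λ² m (ω₁ − ω₀ − 2/t)/ω₁²). -/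
open MeasureTheory intervalIntegral

lemma aux_cos_integral (a b t : ℝ) (ht : t ≠ 0) :
    ∫ ω in a..b, (1 - Real.cos (ω * t)) = (b - a) - (Real.sin (b * t) - Real.sin (a * t)) / t := by
  have h1 : IntervalIntegrable (fun _ : ℝ => (1:ℝ)) volume a b :=
    intervalIntegrable_const
  have h2 : IntervalIntegrable (fun ω : ℝ => Real.cos (ω * t)) volume a b :=
    (Real.continuous_cos.comp (continuous_id.mul continuous_const)).intervalIntegrable a b
  rw [intervalIntegral.integral_sub h1 h2]
  have := intervalIntegral.integral_comp_mul_right (a := a) (b := b) Real.cos ht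
  rw [this]
  simp [integral_cos, smul_eq_mul]
  ring

/-- Proposition 5 (C): two-sided bounds on the decoherence factor
`|s_J(t)| = exp(−4λ² ∫_{ω₀}^{ω₁} h(ω)(1 − cos(ωt))/ω² dω)` for a measurable coupling
density `h` with `0 ≤ m ≤ h ≤ M` on `J = [ω₀, ω₁]`. -/
theorem stmt7 (ω₀ ω₁ t lam m M : ℝ) (h : ℝ → ℝ)
    (h0 : 0 < ω₀) (h01 : ω₀ < ω₁) (ht : 0 < t)
    (hmeas : Measurable h) (hm : 0 ≤ m)
    (hlow : ∀ ω ∈ Set.Icc ω₀ ω₁, m ≤ h ω)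
    (hhigh : ∀ ω ∈ Set.Icc ω₀ ω₁, h ω ≤ M) :
    Real.exp (-4 * lam^2 * M * (ω₁ - ω₀ + 2/t) / ω₀^2)
      ≤ Real.exp (-4 * lam^2 * ∫ ω in ω₀..ω₁, h ω * (1 - Real.cos (ω * t)) / ω ^ 2)
    ∧ Real.exp (-4 * lam^2 * ∫ ω in ω₀..ω₁, h ω * (1 - Real.cos (ω * t)) / ω ^ 2)
      ≤ Real.exp (-4 * lam^2 * m * (ω₁ - ω₀ - 2/t) / ω₁^2) := by
  have hle := h01.le
  have hM : m ≤ M := le_trans (hlow ω₀ ⟨le_refl _, hle⟩) (hhigh ω₀ ⟨le_refl _, hle⟩)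
  have hM0 : 0 ≤ M := hm.trans hM
  set g : ℝ → ℝ := fun ω => h ω * (1 - Real.cos (ω * t)) / ω ^ 2 with hg
  -- integrability of g
  have hgmeas : Measurable g := by
    apply Measurable.div
    · exact hmeas.mul (measurable_const.sub ((measurable_id.mul_const t).cos))
    · exact measurable_id.pow measurable_const
  have hgint : IntervalIntegrable g volume ω₀ ω₁ := by
    rw [intervalIntegrable_iff_integrableOn_Icc_of_le hle]
    apply Measure.integrableOn_of_bounded (M := 2 * M / ω₀ ^ 2)
      (measure_Icc_lt_top).ne hgmeas.aestronglyMeasurable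
    filter_upwards [ae_restrict_mem measurableSet_Icc] with ω hω
    have hω0 : ω₀ ≤ ω := hω.1
    have hωpos : 0 < ω := lt_of_lt_of_le h0 hω0
    have hc1 : Real.cos (ω * t) ≤ 1 := Real.cos_le_one _
    have hc2 : -1 ≤ Real.cos (ω * t) := Real.neg_one_le_cos _
    have hnum : 0 ≤ h ω * (1 - Real.cos (ω * t)) :=
      mul_nonneg (hm.trans (hlow ω hω)) (by linarith)
    rw [Real.norm_eq_abs, abs_of_nonneg (div_nonneg hnum (by positivity))]
    have hnum2 : h ω * (1 - Real.cos (ω * t)) ≤ 2 * M := by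
      have := hhigh ω hω
      nlinarith [hm.trans (hlow ω hω)]
    have hinv : (ω ^ 2)⁻¹ ≤ (ω₀ ^ 2)⁻¹ := by
      apply inv_anti₀ (by positivity)
      exact pow_le_pow_left₀ h0.le hω0 2
    calc g ω = h ω * (1 - Real.cos (ω * t)) * (ω ^ 2)⁻¹ := by rw [hg]; ring
      _ ≤ 2 * M * (ω₀ ^ 2)⁻¹ := by
          apply mul_le_mul hnum2 hinv (by positivity) (by positivity)
      _ = 2 * M / ω₀ ^ 2 := by ring
  -- comparison functions
  have hcosint : IntervalIntegrable (fun ω : ℝ => (1 - Real.cos (ω * t))) volume ω₀ ω₁ :=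
    (continuous_const.sub
      (Real.continuous_cos.comp (continuous_id.mul continuous_const))).intervalIntegrable _ _
  have hval := aux_cos_integral ω₀ ω₁ t ht.ne'
  have hsin1 : -1 ≤ Real.sin (ω₁ * t) := Real.neg_one_le_sin _
  have hsin2 : Real.sin (ω₁ * t) ≤ 1 := Real.sin_le_one _
  have hsin3 : -1 ≤ Real.sin (ω₀ * t) := Real.neg_one_le_sin _
  have hsin4 : Real.sin (ω₀ * t) ≤ 1 := Real.sin_le_one _
  -- upper bound on the integral
  have hup : (∫ ω in ω₀..ω₁, g ω) ≤ M * (ω₁ - ω₀ + 2/t) / ω₀ ^ 2 := by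
    have hptw : ∀ ω ∈ Set.Icc ω₀ ω₁, g ω ≤ (M / ω₀ ^ 2) * (1 - Real.cos (ω * t)) := by
      intro ω hω
      have hω0 : ω₀ ≤ ω := hω.1
      have hωpos : 0 < ω := lt_of_lt_of_le h0 hω0
      have hc1 : Real.cos (ω * t) ≤ 1 := Real.cos_le_one _
      have hinv : (ω ^ 2)⁻¹ ≤ (ω₀ ^ 2)⁻¹ := by
        apply inv_anti₀ (by positivity)
        exact pow_le_pow_left₀ h0.le hω0 2
      have h1 : h ω * (1 - Real.cos (ω * t)) ≤ M * (1 - Real.cos (ω * t)) :=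
        mul_le_mul_of_nonneg_right (hhigh ω hω) (by linarith)
      calc g ω = h ω * (1 - Real.cos (ω * t)) * (ω ^ 2)⁻¹ := by rw [hg]; ring
        _ ≤ M * (1 - Real.cos (ω * t)) * (ω₀ ^ 2)⁻¹ := by
            apply mul_le_mul h1 hinv (by positivity)
            exact mul_nonneg hM0 (by linarith)
        _ = (M / ω₀ ^ 2) * (1 - Real.cos (ω * t)) := by ring
    have hmono := intervalIntegral.integral_mono_on hle hgint
      (hcosint.const_mul (M / ω₀ ^ 2)) hptw
    rw [intervalIntegral.integral_const_mul, hval] at hmono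
    refine hmono.trans ?_
    have key : (ω₁ - ω₀) - (Real.sin (ω₁ * t) - Real.sin (ω₀ * t)) / t ≤ ω₁ - ω₀ + 2/t := by
      have hd : (-2 : ℝ)/t ≤ (Real.sin (ω₁ * t) - Real.sin (ω₀ * t)) / t :=
        (div_le_div_iff_of_pos_right ht).mpr (by linarith)
      have hn : (-2 : ℝ)/t = -(2/t) := neg_div t 2
      linarith
    calc M / ω₀ ^ 2 * ((ω₁ - ω₀) - (Real.sin (ω₁ * t) - Real.sin (ω₀ * t)) / t)
        ≤ M / ω₀ ^ 2 * (ω₁ - ω₀ + 2/t) :=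
          mul_le_mul_of_nonneg_left key (by positivity)
      _ = M * (ω₁ - ω₀ + 2/t) / ω₀ ^ 2 := by ring
  -- lower bound on the integral
  have hlo : m * (ω₁ - ω₀ - 2/t) / ω₁ ^ 2 ≤ ∫ ω in ω₀..ω₁, g ω := by
    have hptw : ∀ ω ∈ Set.Icc ω₀ ω₁, (m / ω₁ ^ 2) * (1 - Real.cos (ω * t)) ≤ g ω := by
      intro ω hω
      have hω0 : 0 < ω := lt_of_lt_of_le h0 hω.1
      have hc1 : Real.cos (ω * t) ≤ 1 := Real.cos_le_one _
      have hinv : (ω₁ ^ 2)⁻¹ ≤ (ω ^ 2)⁻¹ := by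
        apply inv_anti₀ (by positivity)
        exact pow_le_pow_left₀ hω0.le hω.2 2
      have h1 : m * (1 - Real.cos (ω * t)) ≤ h ω * (1 - Real.cos (ω * t)) :=
        mul_le_mul_of_nonneg_right (hlow ω hω) (by linarith)
      calc (m / ω₁ ^ 2) * (1 - Real.cos (ω * t))
          = m * (1 - Real.cos (ω * t)) * (ω₁ ^ 2)⁻¹ := by ring
        _ ≤ h ω * (1 - Real.cos (ω * t)) * (ω ^ 2)⁻¹ := by
            apply mul_le_mul h1 hinv (by positivity)
            exact mul_nonneg (hm.trans (hlow ω hω)) (by linarith)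
        _ = g ω := by rw [hg]; ring
    have hmono := intervalIntegral.integral_mono_on hle
      (hcosint.const_mul (m / ω₁ ^ 2)) hgint hptw
    rw [intervalIntegral.integral_const_mul, hval] at hmono
    refine le_trans ?_ hmono
    have key : ω₁ - ω₀ - 2/t ≤ (ω₁ - ω₀) - (Real.sin (ω₁ * t) - Real.sin (ω₀ * t)) / t := by
      have hd : (Real.sin (ω₁ * t) - Real.sin (ω₀ * t)) / t ≤ 2 / t :=
        (div_le_div_iff_of_pos_right ht).mpr (by linarith)
      linarith
    calc m * (ω₁ - ω₀ - 2/t) / ω₁ ^ 2 = m / ω₁ ^ 2 * (ω₁ - ω₀ - 2/t) := by ring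
      _ ≤ m / ω₁ ^ 2 * ((ω₁ - ω₀) - (Real.sin (ω₁ * t) - Real.sin (ω₀ * t)) / t) :=
          mul_le_mul_of_nonneg_left key (by positivity)
  have hlam : (0:ℝ) ≤ 4 * lam ^ 2 := by positivity
  constructor
  · apply Real.exp_le_exp.mpr
    have h1 := mul_le_mul_of_nonneg_left hup hlam
    calc -4 * lam^2 * M * (ω₁ - ω₀ + 2/t) / ω₀^2
        = -(4 * lam ^ 2 * (M * (ω₁ - ω₀ + 2/t) / ω₀ ^ 2)) := by ring
      _ ≤ -(4 * lam ^ 2 * ∫ ω in ω₀..ω₁, g ω) := neg_le_neg h1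
      _ = -4 * lam^2 * ∫ ω in ω₀..ω₁, g ω := by ring
  · apply Real.exp_le_exp.mpr
    have h1 := mul_le_mul_of_nonneg_left hlo hlam
    calc -4 * lam^2 * ∫ ω in ω₀..ω₁, g ω
        = -(4 * lam ^ 2 * ∫ ω in ω₀..ω₁, g ω) := by ring
      _ ≤ -(4 * lam ^ 2 * (m * (ω₁ - ω₀ - 2/t) / ω₁ ^ 2)) := neg_le_neg h1
      _ = -4 * lam^2 * m * (ω₁ - ω₀ - 2/t) / ω₁^2 := by ring
end

section
/- For every τ ∈ ℝ, ∫₀^∞ x^{−2} e^{−x} (1 − cos(τx)) dx = τ · arctan(τ) − (1/2) · ln(1 + τ²). -/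
/-!
Both sides vanish at `τ = 0`, so it suffices to compare derivatives in `τ`. Differentiating under
the integral sign (all τ-derivatives are dominated by multiples of `e^{-x}`) turns the left side
into `∫ e^{-x} sin(τx)/x`, and once more into `∫ e^{-x} cos(τx) = Re ∫ e^{(-1+iτ)x} = 1/(1+τ²)`.
Integrating back from `τ = 0` gives `arctan τ` for the sine integral, and `arctan` is the
derivative of `τ arctan τ - ½ log(1+τ²)`.
-/

open MeasureTheory Real Set Filter

theorem eq_of_hasDerivAt_eq_of_eq {𝕜 G : Type*} [RCLike 𝕜] [NormedAddCommGroup G]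
    [NormedSpace 𝕜 G] {f g f' : 𝕜 → G} (hf : ∀ x, HasDerivAt f (f' x) x)
    (hg : ∀ x, HasDerivAt g (f' x) x) {a : 𝕜} (ha : f a = g a) (x : 𝕜) : f x = g x := by
  have hfg : ∀ y, HasDerivAt (f - g) 0 y := fun y => by simpa using (hf y).sub (hg y)
  have := is_const_of_deriv_eq_zero (fun y => (hfg y).differentiableAt)
    (fun y => (hfg y).deriv) x a
  simpa [sub_eq_zero, ha] using this

theorem integrableOn_Ioi_of_norm_le_mul_exp_neg {E : Type*} [NormedAddCommGroup E] {f : ℝ → E}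
    {C : ℝ} (hf : ContinuousOn f (Ioi 0)) (h : ∀ x > 0, ‖f x‖ ≤ C * exp (-x)) :
    IntegrableOn f (Ioi 0) := by
  refine ((integrableOn_exp_neg_Ioi 0).const_mul C).mono'
    (hf.aestronglyMeasurable measurableSet_Ioi) ?_
  filter_upwards [ae_restrict_mem measurableSet_Ioi] with x hx
  simpa using h x hx

theorem hasDerivAt_integral_Ioi_of_norm_deriv_le_mul_exp_neg {E : Type*} [NormedAddCommGroup E]
    [NormedSpace ℝ E] {F F' : ℝ → ℝ → E} {τ₀ C : ℝ} {s : Set ℝ} (hs : s ∈ nhds τ₀)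
    (hF : ∀ τ, ContinuousOn (F τ) (Ioi 0)) (hF' : ContinuousOn (F' τ₀) (Ioi 0))
    (hF_int : IntegrableOn (F τ₀) (Ioi 0))
    (h_diff : ∀ x > 0, ∀ τ ∈ s, HasDerivAt (F · x) (F' τ x) τ)
    (h_bound : ∀ x > 0, ∀ τ ∈ s, ‖F' τ x‖ ≤ C * exp (-x)) :
    HasDerivAt (fun τ => ∫ x in Ioi 0, F τ x) (∫ x in Ioi 0, F' τ₀ x) τ₀ :=
  (hasDerivAt_integral_of_dominated_loc_of_deriv_le hs
    (Eventually.of_forall fun τ => (hF τ).aestronglyMeasurable measurableSet_Ioi) hF_int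
    (hF'.aestronglyMeasurable measurableSet_Ioi)
    ((ae_restrict_iff' measurableSet_Ioi).2 (Eventually.of_forall h_bound))
    ((integrableOn_exp_neg_Ioi 0).const_mul C)
    ((ae_restrict_iff' measurableSet_Ioi).2 (Eventually.of_forall h_diff))).2

theorem integral_exp_neg_mul_cos (τ : ℝ) :
    ∫ x in Ioi (0:ℝ), exp (-x) * cos (τ * x) = 1 / (1 + τ ^ 2) := by
  have ha : (-1 + τ * Complex.I).re < 0 := by simp
  have hre : ∀ x : ℝ, exp (-x) * cos (τ * x) = (Complex.exp ((-1 + τ * Complex.I) * x)).re := by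
    intro x; simp [Complex.exp_re]
  simp_rw [hre]
  have h_re_comm := integral_re (integrableOn_exp_mul_complex_Ioi ha 0)
  simp only [RCLike.re_to_complex] at h_re_comm
  rw [h_re_comm, integral_exp_mul_complex_Ioi ha 0]
  simp [Complex.div_re, Complex.normSq_apply]
  field_simp

theorem abs_sin_mul_le (τ : ℝ) {x : ℝ} (hx : 0 ≤ x) : |sin (τ * x)| ≤ |τ| * x := by
  simpa [abs_mul, abs_of_nonneg hx] using abs_sin_le_abs (x := τ * x)

theorem integrableOn_exp_neg_mul_sin_div (τ : ℝ) :
    IntegrableOn (fun x => exp (-x) * sin (τ * x) / x) (Ioi 0) := by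
  refine integrableOn_Ioi_of_norm_le_mul_exp_neg (C := |τ|)
    (by fun_prop (disch := intro x hx; exact ne_of_gt hx)) fun x hx => ?_
  rw [norm_div, norm_mul, norm_of_nonneg (exp_pos _).le, norm_of_nonneg hx.le, Real.norm_eq_abs,
    div_le_iff₀ hx]
  nlinarith [abs_sin_mul_le τ hx.le, exp_pos (-x)]

theorem hasDerivAt_integral_exp_neg_mul_sin_div (τ₀ : ℝ) :
    HasDerivAt (fun τ => ∫ x in Ioi 0, exp (-x) * sin (τ * x) / x) (1 / (1 + τ₀ ^ 2)) τ₀ := by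
  rw [← integral_exp_neg_mul_cos]
  refine hasDerivAt_integral_Ioi_of_norm_deriv_le_mul_exp_neg (C := 1)
    (F := fun τ x => exp (-x) * sin (τ * x) / x) (F' := fun τ x => exp (-x) * cos (τ * x)) univ_mem
    (fun τ => by fun_prop (disch := intro x hx; exact ne_of_gt hx)) (by fun_prop)
    (integrableOn_exp_neg_mul_sin_div τ₀) (fun x hx τ _ => ?_) (fun x _ τ _ => ?_)
  · refine (((hasDerivAt_mul_const x).sin.const_mul (exp (-x))).div_const x).congr_deriv ?_
    field_simp
  · rw [norm_mul, norm_of_nonneg (exp_pos _).le, Real.norm_eq_abs]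
    nlinarith [abs_cos_le_one (τ * x), exp_pos (-x)]

theorem integral_exp_neg_mul_sin_div (τ : ℝ) :
    ∫ x in Ioi 0, exp (-x) * sin (τ * x) / x = arctan τ :=
  eq_of_hasDerivAt_eq_of_eq hasDerivAt_integral_exp_neg_mul_sin_div
    (fun t => by simpa using hasDerivAt_arctan t) (a := 0) (by simp) τ

theorem integrableOn_exp_neg_mul_one_sub_cos_div_sq (τ : ℝ) :
    IntegrableOn (fun x => exp (-x) * (1 - cos (τ * x)) / x ^ 2) (Ioi 0) := by
  refine integrableOn_Ioi_of_norm_le_mul_exp_neg (C := τ ^ 2 / 2)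
    (by fun_prop (disch := intro x hx; exact pow_ne_zero 2 (ne_of_gt hx))) fun x hx => ?_
  have hx2 : 0 < x ^ 2 := by positivity
  have hcos : 0 ≤ 1 - cos (τ * x) := sub_nonneg.2 (cos_le_one _)
  rw [norm_of_nonneg (by positivity), div_le_iff₀ hx2]
  nlinarith [one_sub_sq_div_two_le_cos (x := τ * x), exp_pos (-x)]

theorem hasDerivAt_integral_exp_neg_mul_one_sub_cos_div_sq (τ₀ : ℝ) :
    HasDerivAt (fun τ => ∫ x in Ioi 0, exp (-x) * (1 - cos (τ * x)) / x ^ 2) (arctan τ₀) τ₀ := by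
  rw [← integral_exp_neg_mul_sin_div]
  refine hasDerivAt_integral_Ioi_of_norm_deriv_le_mul_exp_neg (C := |τ₀| + 1)
    (F := fun τ x => exp (-x) * (1 - cos (τ * x)) / x ^ 2)
    (F' := fun τ x => exp (-x) * sin (τ * x) / x) (Metric.ball_mem_nhds τ₀ one_pos)
    (fun τ => by fun_prop (disch := intro x hx; exact pow_ne_zero 2 (ne_of_gt hx)))
    (by fun_prop (disch := intro x hx; exact ne_of_gt hx))
    (integrableOn_exp_neg_mul_one_sub_cos_div_sq τ₀) (fun x hx τ _ => ?_) (fun x hx τ hτ => ?_)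
  · refine ((((hasDerivAt_mul_const x).cos.const_sub 1).const_mul (exp (-x))).div_const
      (x ^ 2)).congr_deriv ?_
    field_simp
  · have hτ : |τ| ≤ |τ₀| + 1 := by
      have := abs_sub_abs_le_abs_sub τ τ₀
      rw [Metric.mem_ball, dist_eq] at hτ
      linarith
    rw [norm_div, norm_mul, norm_of_nonneg (exp_pos _).le, norm_of_nonneg hx.le, Real.norm_eq_abs,
      div_le_iff₀ hx]
    nlinarith [abs_sin_mul_le τ hx.le, exp_pos (-x), abs_nonneg (sin (τ * x)),
      mul_le_mul_of_nonneg_right hτ (mul_pos (exp_pos (-x)) hx).le]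

theorem hasDerivAt_mul_arctan_sub_log (t : ℝ) :
    HasDerivAt (fun t => t * arctan t - 1 / 2 * log (1 + t ^ 2)) (arctan t) t := by
  have hpos : 0 < 1 + t ^ 2 := by positivity
  refine (((hasDerivAt_id t).mul (hasDerivAt_arctan t)).sub
    ((((hasDerivAt_pow 2 t).const_add 1).log hpos.ne').const_mul (1 / 2))).congr_deriv ?_
  simp only [id]
  field_simp
  ring

/-- The case `q = −1`: `∫₀^∞ x^{−2} e^{−x}(1 − cos(τx)) dx = τ·arctan τ − (1/2)ln(1+τ²)`. -/
theorem stmt11 (τ : ℝ) :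
    ∫ x in Set.Ioi (0:ℝ), Real.exp (-x) * (1 - Real.cos (τ * x)) / x ^ 2 =
      τ * Real.arctan τ - (1/2) * Real.log (1 + τ^2) :=
  eq_of_hasDerivAt_eq_of_eq hasDerivAt_integral_exp_neg_mul_one_sub_cos_div_sq
    hasDerivAt_mul_arctan_sub_log (a := 0) (by simp) τ
end
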